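/- arXiv:1605.09198 — 6 statements merged into one kernel-verified Lean document; each statement's English description precedes it below -/
import Mathlib

section
/- Let F : [0,∞) → ℝ be convex and increasing with F(0) = 0, and let f : [a,b] → ℝ be absolutely continuous with f(a) = 0. Then ∫ₐᵇ F'(|f(x)|) |f'(x)| dx ≤ F(∫ₐᵇ |f'(x)| dx). -/
/-!
With `G x = ∫ t in a..x, |f' t|` we have `|f| ≤ G` on `[a, b]`, and `F ∘ G` is monotone there,
so the integral of its almost-everywhere derivative `F' (G x) * |f' x|` is at most
`F (G b) - F (G a) = F (∫ t in a..b, |f' t|)`. Where `f x ≠ 0`, convexity gives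
`F' |f x| ≤ F' (G x)`. The value `F' 0` is unconstrained, but on the level set `{f = 0}` the
derivative `f'` vanishes almost everywhere, because almost every point of a set of reals is an
accumulation point of it.
-/

open MeasureTheory Set Filter Topology

lemma ConvexOn.monotoneOn_of_hasDerivAt {S : Set ℝ} {f f' : ℝ → ℝ} (hfc : ConvexOn ℝ S f)
    (hf : ∀ x ∈ S, HasDerivAt f (f' x) x) : MonotoneOn f' S := by
  intro x hx y hy hxy
  simpa only [(hf x hx).deriv, (hf y hy).deriv] using
    hfc.monotoneOn_deriv (fun z hz => (hf z hz).differentiableAt) hx hy hxy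

lemma MonotoneOn.deriv_nonneg_of_mem_nhds {g : ℝ → ℝ} {s : Set ℝ} {x : ℝ} (hg : MonotoneOn g s)
    (hs : s ∈ 𝓝 x) : 0 ≤ deriv g x := by
  rw [← derivWithin_of_mem_nhds hs]
  exact hg.derivWithin_nonneg

lemma monotoneOn_primitive_of_nonneg {φ : ℝ → ℝ} {a b : ℝ} (hφi : IntervalIntegrable φ volume a b)
    (hφ : ∀ x ∈ Icc a b, 0 ≤ φ x) : MonotoneOn (fun x => ∫ t in a..x, φ t) (Icc a b) := by
  intro x hx y hy hxy
  refine intervalIntegral.integral_mono_interval le_rfl hx.1 hxy ?_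
    (hφi.mono_set (uIcc_subset_uIcc left_mem_uIcc (Icc_subset_uIcc hy)))
  exact (ae_restrict_iff' measurableSet_Ioc).2 <| ae_of_all _ fun t ht =>
    hφ t ⟨ht.1.le, ht.2.trans hy.2⟩

lemma MonotoneOn.intervalIntegral_le_sub_of_ae_le_deriv {g φ : ℝ → ℝ} {a b : ℝ} (hab : a ≤ b)
    (hg : MonotoneOn g (Icc a b)) (hφ : ∀ᵐ x, x ∈ Ioo a b → 0 ≤ φ x ∧ φ x ≤ deriv g x) :
    ∫ x in a..b, φ x ≤ g b - g a := by
  rw [← uIcc_of_le hab] at hg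
  calc ∫ x in a..b, φ x ≤ ∫ x in a..b, deriv g x := by
        rw [intervalIntegral.integral_of_le hab, intervalIntegral.integral_of_le hab,
          integral_Ioc_eq_integral_Ioo, integral_Ioc_eq_integral_Ioo]
        have hφ' := (ae_restrict_iff' measurableSet_Ioo).2 hφ
        have hg' := hg.intervalIntegrable_deriv.1.mono_set Ioo_subset_Ioc_self
        refine integral_mono_of_nonneg ?_ hg' ?_
        · filter_upwards [hφ'] with x hx using hx.1
        · filter_upwards [hφ'] with x hx using hx.2
    _ ≤ g b - g a := by
        have := hg.intervalIntegral_deriv_mem_uIcc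
        rw [uIcc_of_le (sub_nonneg.2 (hg left_mem_uIcc right_mem_uIcc hab))] at this
        exact this.2

lemma ae_accPt_principal (s : Set ℝ) : ∀ᵐ x, x ∈ s → AccPt x (𝓟 s) := by
  filter_upwards [countable_setOfPred_isolated_right_within.ae_notMem volume] with x hx hxs
  have : (𝓝[s ∩ Ioi x] x).NeBot := ⟨fun h => hx ⟨hxs, h⟩⟩
  exact accPt_principal_iff_nhdsWithin.2 <|
    this.mono (nhdsWithin_mono _ fun y hy => ⟨hy.1, (ne_of_gt hy.2 : y ≠ x)⟩)

lemma ae_eq_zero_of_hasDerivWithinAt_of_eqOn_const {E : Type*} [NormedAddCommGroup E]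
    [NormedSpace ℝ E] {f : ℝ → E} {s : Set ℝ} {c : E} (hf : EqOn f (fun _ => c) s) :
    ∀ᵐ x, x ∈ s → ∀ d, HasDerivWithinAt f d s x → d = 0 := by
  filter_upwards [ae_accPt_principal s] with x hacc hxs d hd
  exact (hacc hxs).uniqueDiffWithinAt.eq_deriv _ hd
    ((hasDerivWithinAt_const x s c).congr hf (hf hxs))

lemma ae_hasDerivAt_of_eqOn_integral {E : Type*} [NormedAddCommGroup E] [NormedSpace ℝ E]
    [CompleteSpace E] {f f' : ℝ → E} {a b : ℝ} (hf' : IntervalIntegrable f' volume a b)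
    (hf : ∀ x ∈ Icc a b, f x = ∫ t in a..x, f' t) :
    ∀ᵐ x, x ∈ Ioo a b → HasDerivAt f (f' x) x := by
  filter_upwards [hf'.ae_hasDerivAt_integral] with x hx hxab
  have hIcc : Icc a b ⊆ uIcc a b := Icc_subset_uIcc
  have hab : a ≤ b := (hxab.1.trans hxab.2).le
  have hprim := hx (hIcc (Ioo_subset_Icc_self hxab)) a (hIcc (left_mem_Icc.2 hab))
  refine hprim.congr_of_eventuallyEq ?_
  filter_upwards [Icc_mem_nhds hxab.1 hxab.2] with y hy using hf y hy

lemma ae_mul_abs_le_deriv_comp_primitive_abs {F F' f f' : ℝ → ℝ} {a b : ℝ}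
    (hF'mono : MonotoneOn F' (Ioi 0)) (hF'nonneg : ∀ x ∈ Ioi (0 : ℝ), 0 ≤ F' x)
    (hFderiv : ∀ x ∈ Ioi (0 : ℝ), HasDerivAt F (F' x) x)
    (hf' : IntervalIntegrable f' volume a b) (hf : ∀ x ∈ Icc a b, f x = ∫ t in a..x, f' t)
    (hFG : MonotoneOn (fun x => F (∫ t in a..x, |f' t|)) (Icc a b)) :
    ∀ᵐ x, x ∈ Ioo a b → 0 ≤ F' |f x| * |f' x| ∧
      F' |f x| * |f' x| ≤ deriv (fun x => F (∫ t in a..x, |f' t|)) x := by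
  filter_upwards [ae_hasDerivAt_of_eqOn_integral hf' hf,
    ae_hasDerivAt_of_eqOn_integral hf'.abs fun _ _ => rfl,
    ae_eq_zero_of_hasDerivWithinAt_of_eqOn_const (s := {x | f x = 0}) (c := 0) fun _ h => h]
    with x hfx hGx hf'0 hx
  by_cases hzero : f x = 0
  · simp [hf'0 hzero _ (hfx hx).hasDerivWithinAt,
      hFG.deriv_nonneg_of_mem_nhds (Icc_mem_nhds hx.1 hx.2)]
  have hfG : |f x| ≤ ∫ t in a..x, |f' t| :=
    hf x (Ioo_subset_Icc_self hx) ▸ intervalIntegral.abs_integral_le_integral_abs hx.1.le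
  have hpos : 0 < |f x| := abs_pos.2 hzero
  have hFG' : HasDerivAt (fun y => F (∫ t in a..y, |f' t|))
      (F' (∫ t in a..x, |f' t|) * |f' x|) x :=
    (hFderiv _ (hpos.trans_le hfG)).comp x (hGx hx)
  rw [hFG'.deriv]
  exact ⟨mul_nonneg (hF'nonneg _ hpos) (abs_nonneg _),
    mul_le_mul_of_nonneg_right (hF'mono hpos (hpos.trans_le hfG) hfG) (abs_nonneg _)⟩

theorem godunova_levin_general (a b : ℝ) (hab : a < b) (F F' : ℝ → ℝ)
    (hFconv : ConvexOn ℝ (Set.Ici (0 : ℝ)) F)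
    (hFmono : MonotoneOn F (Set.Ici (0 : ℝ)))
    (hF0 : F 0 = 0)
    (hFderiv : ∀ x ∈ Set.Ioi (0 : ℝ), HasDerivAt F (F' x) x)
    (f f' : ℝ → ℝ)
    (hf' : IntervalIntegrable f' MeasureTheory.volume a b)
    (hf : ∀ x ∈ Set.Icc a b, f x = ∫ t in a..x, f' t) :
    ∫ x in a..b, F' |f x| * |f' x| ≤ F (∫ x in a..b, |f' x|) := by
  have hF'mono : MonotoneOn F' (Ioi 0) :=
    (hFconv.subset Ioi_subset_Ici_self (convex_Ioi 0)).monotoneOn_of_hasDerivAt hFderiv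
  have hF'nonneg : ∀ x ∈ Ioi (0 : ℝ), 0 ≤ F' x := fun x hx =>
    (hFderiv x hx).deriv ▸ (hFmono.mono Ioi_subset_Ici_self).deriv_nonneg_of_mem_nhds
      (Ioi_mem_nhds hx)
  have hFG : MonotoneOn (fun x => F (∫ t in a..x, |f' t|)) (Icc a b) :=
    hFmono.comp (monotoneOn_primitive_of_nonneg hf'.abs fun _ _ => abs_nonneg _)
      fun x hx => intervalIntegral.integral_nonneg hx.1 fun _ _ => abs_nonneg _
  calc ∫ x in a..b, F' |f x| * |f' x|
      ≤ F (∫ t in a..b, |f' t|) - F (∫ t in a..a, |f' t|) :=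
        hFG.intervalIntegral_le_sub_of_ae_le_deriv hab.le <|
          ae_mul_abs_le_deriv_comp_primitive_abs hF'mono hF'nonneg hFderiv hf' hf hFG
    _ = F (∫ x in a..b, |f' x|) := by simp [hF0]

/-- Godunova–Levin inequality: if `F` is convex and increasing on `[0,∞)` with `F 0 = 0`,
continuously differentiable on `(0,∞)` with derivative `F'`, and `f` is absolutely
continuous on `[a,b]` with `f a = 0`, then
`∫ₐᵇ F'(|f x|) |f' x| dx ≤ F (∫ₐᵇ |f' x| dx)`. -/
theorem godunova_levin (a b : ℝ) (hab : a < b) (F F' : ℝ → ℝ)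
    (hFconv : ConvexOn ℝ (Set.Ici (0 : ℝ)) F)
    (hFmono : MonotoneOn F (Set.Ici (0 : ℝ)))
    (hF0 : F 0 = 0)
    (hFderiv : ∀ x ∈ Set.Ioi (0 : ℝ), HasDerivAt F (F' x) x)
    (hF'cont : ContinuousOn F' (Set.Ioi (0 : ℝ)))
    (f f' : ℝ → ℝ)
    (hf' : IntervalIntegrable f' MeasureTheory.volume a b)
    (hf : ∀ x ∈ Set.Icc a b, f x = ∫ t in a..x, f' t)
    (hfa : f a = 0) :
    ∫ x in a..b, F' |f x| * |f' x| ≤ F (∫ x in a..b, |f' x|) :=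
  godunova_levin_general a b hab F F' hFconv hFmono hF0 hFderiv f f' hf' hf
end

section
/- Let F : [0,∞)^m → ℝ be C¹ with F(0,...,0)=0 and each D_iF nonnegative and increasing in each variable. Let f_1,...,f_m : [a,b] → ℝ be absolutely continuous with f_i(a) = 0. Then ∫ₐᵇ ∑_{i=1}^m D_iF(|f_1(x)|,...,|f_m(x)|) |f_i'(x)| dx ≤ F(∫ₐᵇ |f_1'(x)| dx, ..., ∫ₐᵇ |f_m'(x)| dx). -/
/-!
With `y i x = ∫ₐˣ |f' i|` we have `|f i x| ≤ y i x`, so by monotonicity of the `D i` the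
integrand is dominated by `∑ i, D i (y x) * |f' i x|`, which is a.e. the derivative of `F ∘ y`.
As `F` is Lipschitz on a compact convex set containing the range of `y`, `F ∘ y` is absolutely
continuous, so the fundamental theorem of calculus evaluates the dominating integral as
`F (y b) - F (y a) = F (y b)`.
-/

open MeasureTheory Set Filter intervalIntegral

theorem Convex.exists_lipschitzOnWith_of_hasFDerivWithinAt_of_continuousOn
    {E G : Type*} [NormedAddCommGroup E] [NormedSpace ℝ E] [NormedAddCommGroup G]
    [NormedSpace ℝ G] {f : E → G} {f' : E → E →L[ℝ] G} {s : Set E}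
    (hs : Convex ℝ s) (hs' : IsCompact s) (hf : ∀ x ∈ s, HasFDerivWithinAt f (f' x) s x)
    (hf' : ContinuousOn f' s) : ∃ K, LipschitzOnWith K f s := by
  obtain ⟨C, hC⟩ := hs'.exists_bound_of_continuousOn hf'
  exact ⟨C.toNNReal, hs.lipschitzOnWith_of_nnnorm_hasFDerivWithin_le hf fun x hx =>
    by simpa [← NNReal.coe_le_coe] using (hC x hx).trans (le_max_left C 0)⟩

namespace AbsolutelyContinuousOnInterval

variable {a b : ℝ}

theorem comp_lipschitzOnWith {X Y : Type*} [PseudoMetricSpace X] [PseudoMetricSpace Y]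
    {f : ℝ → X} {g : X → Y} {K : NNReal} {s : Set X} (hg : LipschitzOnWith K g s)
    (hf : AbsolutelyContinuousOnInterval f a b) (hfs : MapsTo f (uIcc a b) s) :
    AbsolutelyContinuousOnInterval (g ∘ f) a b := by
  unfold AbsolutelyContinuousOnInterval at hf ⊢
  apply squeeze_zero' (Eventually.of_forall fun _ => Finset.sum_nonneg fun _ _ => dist_nonneg)
    ?_ (by simpa using hf.const_mul (K : ℝ))
  rw [eventually_inf_principal]
  filter_upwards with E hE
  rw [Finset.mul_sum]
  gcongr with i hi
  exact hg.dist_le_mul _ (hfs (hE.1 i hi).1) _ (hfs (hE.1 i hi).2)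

theorem pi {ι : Type*} [Fintype ι] {X : ι → Type*} [∀ i, PseudoMetricSpace (X i)]
    {f : ∀ i, ℝ → X i} (hf : ∀ i, AbsolutelyContinuousOnInterval (f i) a b) :
    AbsolutelyContinuousOnInterval (fun x i => f i x) a b := by
  unfold AbsolutelyContinuousOnInterval at hf ⊢
  apply squeeze_zero (fun _ => Finset.sum_nonneg fun _ _ => dist_nonneg) (fun E => ?_)
    (by simpa using tendsto_finsetSum Finset.univ fun i _ => hf i)
  rw [Finset.sum_comm]
  gcongr with k
  exact (dist_pi_le_iff (Finset.sum_nonneg fun _ _ => dist_nonneg)).2 fun i =>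
    Finset.single_le_sum (f := fun i => dist (f i (E.2 k).1) (f i (E.2 k).2))
      (fun _ _ => dist_nonneg) (Finset.mem_univ i)

end AbsolutelyContinuousOnInterval

theorem integral_sum_mul_primitive_eq_sub {ι : Type*} [Fintype ι] {a b : ℝ}
    {F : (ι → ℝ) → ℝ} {D : ι → (ι → ℝ) → ℝ} {s : Set (ι → ℝ)}
    (hs : Convex ℝ s) (hs' : IsClosed s)
    (hF : ∀ x ∈ s,
      HasFDerivAt F (∑ i, D i x • (ContinuousLinearMap.proj i : (ι → ℝ) →L[ℝ] ℝ)) x)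
    (hD : ∀ i, ContinuousOn (D i) s) {g : ι → ℝ → ℝ}
    (hg : ∀ i, IntervalIntegrable (g i) volume a b)
    (hgs : ∀ x ∈ uIcc a b, (fun i => ∫ t in a..x, g i t) ∈ s) :
    ∫ x in a..b, ∑ i, D i (fun j => ∫ t in a..x, g j t) * g i x =
      F (fun i => ∫ t in a..b, g i t) - F 0 := by
  set y : ℝ → ι → ℝ := fun x i => ∫ t in a..x, g i t
  have hy : AbsolutelyContinuousOnInterval y a b :=
    .pi fun i => (hg i).absolutelyContinuousOnInterval_intervalIntegral left_mem_uIcc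
  obtain ⟨R, hR⟩ := hy.exists_bound
  obtain ⟨L, hL⟩ :=
    (hs.inter (convex_closedBall 0 R)).exists_lipschitzOnWith_of_hasFDerivWithinAt_of_continuousOn
      ((isCompact_closedBall 0 R).inter_left hs') (fun x hx => (hF x hx.1).hasFDerivWithinAt)
      (continuousOn_finsetSum _ fun i _ => ((hD i).mono inter_subset_left).smul continuousOn_const)
  have hFy : AbsolutelyContinuousOnInterval (F ∘ y) a b :=
    hy.comp_lipschitzOnWith hL fun x hx => ⟨hgs x hx, mem_closedBall_zero_iff.2 (hR x hx)⟩
  have hya : y a = 0 := by ext; simp [y]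
  calc _ = ∫ x in a..b, deriv (F ∘ y) x := by
        refine intervalIntegral.integral_congr_ae ?_
        filter_upwards [ae_all_iff.2 fun i => (hg i).ae_hasDerivAt_integral] with x hx hxab
        have hy' : HasDerivAt y (fun i => g i x) x :=
          hasDerivAt_pi.2 fun i => hx i (uIoc_subset_uIcc hxab) a left_mem_uIcc
        rw [((hF _ (hgs x (uIoc_subset_uIcc hxab))).comp_hasDerivAt x hy').deriv]
        simp
    _ = F (y b) - F (y a) := hFy.integral_deriv_eq_sub
    _ = _ := by rw [hya]

theorem IntervalIntegrable.sum_comp_mul {ι : Type*} [Fintype ι] {a b : ℝ}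
    {D : ι → (ι → ℝ) → ℝ} {s : Set (ι → ℝ)} (hD : ∀ i, ContinuousOn (D i) s)
    {φ : ℝ → ι → ℝ} (hφ : ContinuousOn φ (uIcc a b)) (hφs : MapsTo φ (uIcc a b) s)
    {g : ι → ℝ → ℝ} (hg : ∀ i, IntervalIntegrable (g i) volume a b) :
    IntervalIntegrable (fun x => ∑ i, D i (φ x) * g i x) volume a b := by
  simpa only [Finset.sum_fn, Function.comp_apply] using
    IntervalIntegrable.sum Finset.univ fun i _ => (hg i).continuousOn_mul ((hD i).comp hφ hφs)

theorem opial_composition_several_functions_general (m : ℕ) (a b : ℝ) (hab : a < b)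
    (F : (Fin m → ℝ) → ℝ) (D : Fin m → (Fin m → ℝ) → ℝ)
    (hF0 : F (fun _ => 0) = 0)
    (hFderiv : ∀ x : Fin m → ℝ, (∀ i, 0 ≤ x i) →
      HasFDerivAt F (∑ i, D i x • (ContinuousLinearMap.proj i : (Fin m → ℝ) →L[ℝ] ℝ)) x)
    (hDcont : ∀ i, ContinuousOn (D i) {x : Fin m → ℝ | ∀ j, 0 ≤ x j})
    (hDmono : ∀ i (x y : Fin m → ℝ), (∀ j, 0 ≤ x j) → (∀ j, x j ≤ y j) → D i x ≤ D i y)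
    (f f' : Fin m → ℝ → ℝ)
    (hf' : ∀ i, IntervalIntegrable (f' i) MeasureTheory.volume a b)
    (hf : ∀ i, ∀ x ∈ Set.Icc a b, f i x = ∫ t in a..x, f' i t) :
    ∫ x in a..b, ∑ i, D i (fun j => |f j x|) * |f' i x| ≤
      F (fun i => ∫ x in a..b, |f' i x|) := by
  have hab' : a ≤ b := hab.le
  have hint : ∀ i, IntervalIntegrable (fun t => |f' i t|) volume a b :=
    fun i => (hf' i).abs
  set y : ℝ → Fin m → ℝ := fun x i => ∫ t in a..x, |f' i t|
  have hy_nonneg : ∀ x ∈ uIcc a b, ∀ j, 0 ≤ y x j := fun x hx j =>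
    integral_nonneg (uIcc_of_le hab' ▸ hx).1 fun _ _ => abs_nonneg _
  have hf_le_y : ∀ x ∈ Icc a b, ∀ j, |f j x| ≤ y x j := fun x hx j => by
    rw [hf j x hx]
    exact abs_integral_le_integral_abs hx.1
  have hf_cont : ContinuousOn (fun x j => |f j x|) (uIcc a b) := continuousOn_pi.2 fun j =>
    ((continuousOn_primitive_interval' (hf' j) left_mem_uIcc).congr
      fun x hx => hf j x (uIcc_of_le hab' ▸ hx)).abs
  have hy_cont : ContinuousOn y (uIcc a b) := continuousOn_pi.2 fun j =>
    continuousOn_primitive_interval' (hint j) left_mem_uIcc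
  have hFTC := integral_sum_mul_primitive_eq_sub (convex_Ici 0) isClosed_Ici hFderiv hDcont hint
    hy_nonneg
  calc _ ≤ ∫ x in a..b, ∑ i, D i (y x) * |f' i x| :=
        integral_mono_on hab'
          (IntervalIntegrable.sum_comp_mul hDcont hf_cont (fun _ _ _ => abs_nonneg _) hint)
          (IntervalIntegrable.sum_comp_mul hDcont hy_cont hy_nonneg hint)
          fun x hx => Finset.sum_le_sum fun i _ => mul_le_mul_of_nonneg_right
            (hDmono i _ _ (fun _ => abs_nonneg _) (hf_le_y x hx))
            (abs_nonneg _)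
    _ = _ := by rw [hFTC, Pi.zero_def, hF0, sub_zero]

/-- One-dimensional real case of Theorem 3.1: if `F : [0,∞)^m → ℝ` is `C¹` with
`F 0 = 0` and partial derivatives `D i` nonnegative and increasing in each variable,
and `f i` are absolutely continuous on `[a,b]` with `f i a = 0`, then
`∫ₐᵇ ∑ i, D i (|f ·|) * |f' i| ≤ F (fun i => ∫ₐᵇ |f' i|)`. -/
theorem opial_composition_several_functions (m : ℕ) (a b : ℝ) (hab : a < b)
    (F : (Fin m → ℝ) → ℝ) (D : Fin m → (Fin m → ℝ) → ℝ)
    (hF0 : F (fun _ => 0) = 0)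
    (hFderiv : ∀ x : Fin m → ℝ, (∀ i, 0 ≤ x i) →
      HasFDerivAt F (∑ i, D i x • (ContinuousLinearMap.proj i : (Fin m → ℝ) →L[ℝ] ℝ)) x)
    (hDcont : ∀ i, ContinuousOn (D i) {x : Fin m → ℝ | ∀ j, 0 ≤ x j})
    (hDnonneg : ∀ i (x : Fin m → ℝ), (∀ j, 0 ≤ x j) → 0 ≤ D i x)
    (hDmono : ∀ i (x y : Fin m → ℝ), (∀ j, 0 ≤ x j) → (∀ j, x j ≤ y j) → D i x ≤ D i y)
    (f f' : Fin m → ℝ → ℝ)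
    (hf' : ∀ i, IntervalIntegrable (f' i) MeasureTheory.volume a b)
    (hf : ∀ i, ∀ x ∈ Set.Icc a b, f i x = ∫ t in a..x, f' i t)
    (hfa : ∀ i, f i a = 0) :
    ∫ x in a..b, ∑ i, D i (fun j => |f j x|) * |f' i x| ≤
      F (fun i => ∫ x in a..b, |f' i x|) :=
  opial_composition_several_functions_general m a b hab F D hF0 hFderiv hDcont hDmono f f' hf' hf
end

section
/- Let f_1, f_2 : [a,b] → ℝ be absolutely continuous with f_1(a) = f_2(a) = 0. Then ∫ₐᵇ (|f_1'(x) f_2(x)| + |f_1(x) f_2'(x)|) dx ≤ (∫ₐᵇ |f_1'(x)| dx)(∫ₐᵇ |f_2'(x)| dx). -/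
open MeasureTheory Set intervalIntegral

/-- Fubini-based "integration by parts" identity for primitives of integrable functions. -/
lemma pachpatte_parts (a b : ℝ) (hab : a ≤ b) (g₁ g₂ : ℝ → ℝ)
    (h₁ : IntervalIntegrable g₁ volume a b) (h₂ : IntervalIntegrable g₂ volume a b) :
    ∫ x in a..b, (g₁ x * (∫ t in a..x, g₂ t) + (∫ t in a..x, g₁ t) * g₂ x) =
      (∫ x in a..b, g₁ x) * (∫ x in a..b, g₂ x) := by
  set μ : Measure ℝ := volume.restrict (Ioc a b) with hμ
  have h₁' : Integrable g₁ μ := (intervalIntegrable_iff_integrableOn_Ioc_of_le hab).1 h₁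
  have h₂' : Integrable g₂ μ := (intervalIntegrable_iff_integrableOn_Ioc_of_le hab).1 h₂
  set K : ℝ × ℝ → ℝ := fun p => if p.2 ≤ p.1 then g₁ p.1 * g₂ p.2 else 0 with hK_def
  set K' : ℝ × ℝ → ℝ := fun p => if p.1 < p.2 then g₁ p.1 * g₂ p.2 else 0 with hK'_def
  have hF : Integrable (fun p : ℝ × ℝ => g₁ p.1 * g₂ p.2) (μ.prod μ) := h₁'.mul_prod h₂'
  have hKind : K = Set.indicator {p : ℝ × ℝ | p.2 ≤ p.1} (fun p => g₁ p.1 * g₂ p.2) := by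
    funext p; simp [hK_def, Set.indicator_apply]
  have hK'ind : K' = Set.indicator {p : ℝ × ℝ | p.1 < p.2} (fun p => g₁ p.1 * g₂ p.2) := by
    funext p; simp [hK'_def, Set.indicator_apply]
  have hK : Integrable K (μ.prod μ) := by
    rw [hKind]; exact hF.indicator (measurableSet_le measurable_snd measurable_fst)
  have hK' : Integrable K' (μ.prod μ) := by
    rw [hK'ind]; exact hF.indicator (measurableSet_lt measurable_fst measurable_snd)
  have hsum : ∀ p : ℝ × ℝ, K p + K' p = g₁ p.1 * g₂ p.2 := by
    intro p
    rcases le_or_gt p.2 p.1 with h | h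
    · simp [hK_def, hK'_def, h, not_lt.2 h]
    · simp [hK_def, hK'_def, h, not_le.2 h]
  -- term1
  have hterm1 : ∫ p, K p ∂(μ.prod μ) = ∫ x in a..b, g₁ x * (∫ t in a..x, g₂ t) := by
    rw [MeasureTheory.integral_prod _ hK, integral_of_le hab]
    refine integral_congr_ae ((ae_restrict_iff' measurableSet_Ioc).2 (.of_forall fun x hx => ?_))
    have : (fun t => K (x, t)) = fun t => g₁ x * Set.indicator (Iic x) g₂ t := by
      funext t; simp [hK_def, Set.indicator_apply]
    show (∫ y, K (x, y) ∂μ) = g₁ x * ∫ t in a..x, g₂ t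
    rw [this, MeasureTheory.integral_const_mul, hμ,
      MeasureTheory.integral_indicator measurableSet_Iic,
      Measure.restrict_restrict measurableSet_Iic]
    have hset : Iic x ∩ Ioc a b = Ioc a x := by
      ext y
      constructor
      · rintro ⟨h1, h2, h3⟩; exact ⟨h2, h1⟩
      · rintro ⟨h1, h2⟩; exact ⟨h2, h1, h2.trans hx.2⟩
    rw [hset, ← integral_of_le hx.1.le]
  -- term2
  have hterm2 : ∫ p, K' p ∂(μ.prod μ) = ∫ x in a..b, (∫ t in a..x, g₁ t) * g₂ x := by
    rw [MeasureTheory.integral_prod_symm _ hK', integral_of_le hab]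
    refine integral_congr_ae ((ae_restrict_iff' measurableSet_Ioc).2 (.of_forall fun t ht => ?_))
    have : (fun x => K' (x, t)) = fun x => Set.indicator (Iio t) g₁ x * g₂ t := by
      funext x; simp [hK'_def, Set.indicator_apply]
    show (∫ x, K' (x, t) ∂μ) = (∫ s in a..t, g₁ s) * g₂ t
    rw [this, MeasureTheory.integral_mul_const, hμ,
      MeasureTheory.integral_indicator measurableSet_Iio,
      Measure.restrict_restrict measurableSet_Iio]
    have hset : Iio t ∩ Ioc a b = Ioo a t := by
      ext y
      constructor
      · rintro ⟨h1, h2, h3⟩; exact ⟨h2, h1⟩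
      · rintro ⟨h1, h2⟩; exact ⟨h2, h1, h2.le.trans ht.2⟩
    rw [hset, ← MeasureTheory.integral_Ioc_eq_integral_Ioo, ← integral_of_le ht.1.le]
  -- combine
  have hadd : (∫ p, K p ∂(μ.prod μ)) + ∫ p, K' p ∂(μ.prod μ)
      = (∫ x in a..b, g₁ x) * (∫ x in a..b, g₂ x) := by
    rw [← MeasureTheory.integral_add hK hK']
    simp_rw [hsum]
    rw [MeasureTheory.integral_prod_mul, integral_of_le hab, integral_of_le hab]
  have hG₂cont : ContinuousOn (fun x => ∫ t in a..x, g₂ t) (uIcc a b) :=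
    intervalIntegral.continuousOn_primitive_interval' h₂ left_mem_uIcc
  have hG₁cont : ContinuousOn (fun x => ∫ t in a..x, g₁ t) (uIcc a b) :=
    intervalIntegral.continuousOn_primitive_interval' h₁ left_mem_uIcc
  have hint1 : IntervalIntegrable (fun x => g₁ x * (∫ t in a..x, g₂ t)) volume a b :=
    h₁.mul_continuousOn hG₂cont
  have hint2 : IntervalIntegrable (fun x => (∫ t in a..x, g₁ t) * g₂ x) volume a b :=
    h₂.continuousOn_mul hG₁cont
  calc ∫ x in a..b, (g₁ x * (∫ t in a..x, g₂ t) + (∫ t in a..x, g₁ t) * g₂ x)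
      = (∫ x in a..b, g₁ x * (∫ t in a..x, g₂ t)) + ∫ x in a..b, (∫ t in a..x, g₁ t) * g₂ x :=
        intervalIntegral.integral_add hint1 hint2
    _ = (∫ x in a..b, g₁ x) * (∫ x in a..b, g₂ x) := by rw [← hterm1, ← hterm2, hadd]

/-- Pachpatte's inequality (real case): if `f₁, f₂` are absolutely continuous on `[a,b]`
with `f₁ a = f₂ a = 0`, then
`∫ₐᵇ (|f₁' f₂| + |f₁ f₂'|) ≤ (∫ₐᵇ |f₁'|) (∫ₐᵇ |f₂'|)`. -/
theorem pachpatte_product (a b : ℝ) (hab : a < b) (f₁ f₁' f₂ f₂' : ℝ → ℝ)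
    (hf₁' : IntervalIntegrable f₁' MeasureTheory.volume a b)
    (hf₂' : IntervalIntegrable f₂' MeasureTheory.volume a b)
    (hf₁ : ∀ x ∈ Set.Icc a b, f₁ x = ∫ t in a..x, f₁' t)
    (hf₂ : ∀ x ∈ Set.Icc a b, f₂ x = ∫ t in a..x, f₂' t)
    (hf₁a : f₁ a = 0) (hf₂a : f₂ a = 0) :
    ∫ x in a..b, (|f₁' x * f₂ x| + |f₁ x * f₂' x|) ≤
      (∫ x in a..b, |f₁' x|) * (∫ x in a..b, |f₂' x|) := by
  have hab' : a ≤ b := hab.le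
  have huIcc : uIcc a b = Icc a b := uIcc_of_le hab'
  set C₁ : ℝ → ℝ := fun x => ∫ t in a..x, f₁' t with hC₁
  set C₂ : ℝ → ℝ := fun x => ∫ t in a..x, f₂' t with hC₂
  set G₁ : ℝ → ℝ := fun x => ∫ t in a..x, |f₁' t| with hG₁
  set G₂ : ℝ → ℝ := fun x => ∫ t in a..x, |f₂' t| with hG₂
  have hC₁cont : ContinuousOn C₁ (uIcc a b) :=
    intervalIntegral.continuousOn_primitive_interval' hf₁' left_mem_uIcc
  have hC₂cont : ContinuousOn C₂ (uIcc a b) :=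
    intervalIntegral.continuousOn_primitive_interval' hf₂' left_mem_uIcc
  have hG₁cont : ContinuousOn G₁ (uIcc a b) :=
    intervalIntegral.continuousOn_primitive_interval' hf₁'.abs left_mem_uIcc
  have hG₂cont : ContinuousOn G₂ (uIcc a b) :=
    intervalIntegral.continuousOn_primitive_interval' hf₂'.abs left_mem_uIcc
  have hstep1 : ∫ x in a..b, (|f₁' x * f₂ x| + |f₁ x * f₂' x|)
      = ∫ x in a..b, (|f₁' x * C₂ x| + |C₁ x * f₂' x|) := by
    refine intervalIntegral.integral_congr fun x hx => ?_
    rw [huIcc] at hx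
    rw [hf₁ x hx, hf₂ x hx]
  have hint1 : IntervalIntegrable (fun x => |f₁' x * C₂ x| + |C₁ x * f₂' x|) volume a b :=
    ((hf₁'.mul_continuousOn hC₂cont).abs).add ((hf₂'.continuousOn_mul hC₁cont).abs)
  have hint2 : IntervalIntegrable (fun x => |f₁' x| * G₂ x + G₁ x * |f₂' x|) volume a b :=
    (hf₁'.abs.mul_continuousOn hG₂cont).add (hf₂'.abs.continuousOn_mul hG₁cont)
  have hstep2 : ∫ x in a..b, (|f₁' x * C₂ x| + |C₁ x * f₂' x|)
      ≤ ∫ x in a..b, (|f₁' x| * G₂ x + G₁ x * |f₂' x|) := by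
    refine intervalIntegral.integral_mono_on hab' hint1 hint2 fun x hx => ?_
    have hC₂le : |C₂ x| ≤ G₂ x := by
      simpa using intervalIntegral.abs_integral_le_integral_abs (f := f₂') (a := a) (b := x) hx.1
    have hC₁le : |C₁ x| ≤ G₁ x := by
      simpa using intervalIntegral.abs_integral_le_integral_abs (f := f₁') (a := a) (b := x) hx.1
    have h1 : |f₁' x * C₂ x| ≤ |f₁' x| * G₂ x := by
      rw [abs_mul]; exact mul_le_mul_of_nonneg_left hC₂le (abs_nonneg _)
    have h2 : |C₁ x * f₂' x| ≤ G₁ x * |f₂' x| := by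
      rw [abs_mul]; exact mul_le_mul_of_nonneg_right hC₁le (abs_nonneg _)
    exact add_le_add h1 h2
  have hstep3 : ∫ x in a..b, (|f₁' x| * G₂ x + G₁ x * |f₂' x|)
      = (∫ x in a..b, |f₁' x|) * (∫ x in a..b, |f₂' x|) :=
    pachpatte_parts a b hab' (fun x => |f₁' x|) (fun x => |f₂' x|) hf₁'.abs hf₂'.abs
  rw [hstep1, ← hstep3]
  exact hstep2
end

section
/- Let α, β > 0 with α + β ≥ 1, and let f : [a,b] → ℝ be absolutely continuous with f(a)=0. Then ∫ₐᵇ |f(x)|^β |f'(x)|^α dx ≤ (α/(α+β))^{α/(α+β)} · [∫ₐᵇ (x−a)^{α+β−1} dx]^{β/(α+β)} · ∫ₐᵇ |f'(x)|^{α+β} dx. -/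
/-!
Put `F x = ∫ t in a..x, |f' t| ^ (α + β)`. Hölder's inequality on `[a, x]` gives
`|f x| ≤ (x - a) ^ ((α + β - 1) / (α + β)) * F x ^ (1 / (α + β))`. Inserting this into the
integrand and applying Hölder with exponents `(α + β) / β` and `(α + β) / α` separates the
weight `∫ (x - a) ^ (α + β - 1)` from `∫ F ^ (β / α) * F'`, and the latter is at most
`α / (α + β) * F b ^ ((α + β) / α)` because `F ^ (β / α + 1)` is monotone with a.e.
derivative `(β / α + 1) * F ^ (β / α) * F'`.
-/

open MeasureTheory Set intervalIntegral

theorem intervalIntegral_rpow_primitive_mul_le {g : ℝ → ℝ} {a b c : ℝ} (hab : a ≤ b)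
    (hc : 0 ≤ c) (hg0 : ∀ x, 0 ≤ g x) (hg : IntervalIntegrable g volume a b) :
    ∫ x in a..b, (∫ t in a..x, g t) ^ c * g x ≤ (∫ x in a..b, g x) ^ (c + 1) / (c + 1) := by
  set F : ℝ → ℝ := fun x => ∫ t in a..x, g t
  set G : ℝ → ℝ := fun x => F x ^ (c + 1) / (c + 1)
  have hc1 : 0 < c + 1 := by linarith
  have hFmono : MonotoneOn F (Icc a b) := fun x hx y hy hxy =>
    integral_mono_interval le_rfl hx.1 hxy (ae_of_all _ fun t => hg0 t)
      (hg.mono_set (by rw [uIcc_of_le hab, uIcc_of_le hy.1]; exact Icc_subset_Icc_right hy.2))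
  have hFa : F a = 0 := integral_same
  have hF0 : ∀ x ∈ Icc a b, 0 ≤ F x := fun x hx =>
    hFa ▸ hFmono ⟨le_rfl, hab⟩ hx hx.1
  have hGmono : MonotoneOn G (uIcc a b) := by
    rw [uIcc_of_le hab]
    exact fun x hx y hy hxy => div_le_div_of_nonneg_right
      (Real.rpow_le_rpow (hF0 x hx) (hFmono hx hy hxy) hc1.le) hc1.le
  have hGderiv : ∀ᵐ x, x ∈ uIoc a b → deriv G x = F x ^ c * g x := by
    filter_upwards [hg.ae_hasDerivAt_integral] with x hx hxI
    have hF : HasDerivAt F (g x) x := hx (uIoc_subset_uIcc hxI) a left_mem_uIcc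
    rw [((hF.rpow_const (Or.inr (by linarith))).div_const (c + 1)).deriv, add_sub_cancel_right]
    field_simp
  have hGb : 0 ≤ G b := div_nonneg (Real.rpow_nonneg (hF0 b ⟨hab, le_rfl⟩) _) hc1.le
  have hGa : G a = 0 := by simp [G, hFa, Real.zero_rpow hc1.ne']
  calc ∫ x in a..b, F x ^ c * g x = ∫ x in a..b, deriv G x := (integral_congr_ae hGderiv).symm
    _ ≤ G b := by
      -- for a monotone function the integral of the derivative is at most the increment,
      -- so the absolute continuity of `G` is never needed
      have := (hGmono.intervalIntegral_deriv_mem_uIcc).2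
      rwa [hGa, sub_zero, max_eq_right hGb] at this

section Holder

variable {a b p : ℝ} {u v : ℝ → ℝ}

theorem memLp_restrict_Ioc_of_intervalIntegrable_rpow (hab : a ≤ b) (hp : 0 < p)
    (hu0 : ∀ x ∈ Ioc a b, 0 ≤ u x) (hu : AEStronglyMeasurable u (volume.restrict (Ioc a b)))
    (hup : IntervalIntegrable (fun x => u x ^ p) volume a b) :
    MemLp u (ENNReal.ofReal p) (volume.restrict (Ioc a b)) := by
  refine (integrable_norm_rpow_iff hu (by simpa using hp) ENNReal.ofReal_ne_top).1 ?_
  refine ((intervalIntegrable_iff_integrableOn_Ioc_of_le hab).1 hup).congr ?_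
  filter_upwards [ae_restrict_mem measurableSet_Ioc] with x hx
  rw [ENNReal.toReal_ofReal hp.le, Real.norm_of_nonneg (hu0 x hx)]

variable {q : ℝ}

theorem intervalIntegrable_mul_of_holderConjugate (hab : a ≤ b) (hpq : p.HolderConjugate q)
    (hu0 : ∀ x ∈ Ioc a b, 0 ≤ u x) (hv0 : ∀ x ∈ Ioc a b, 0 ≤ v x)
    (hu : AEStronglyMeasurable u (volume.restrict (Ioc a b)))
    (hv : AEStronglyMeasurable v (volume.restrict (Ioc a b)))
    (hup : IntervalIntegrable (fun x => u x ^ p) volume a b)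
    (hvq : IntervalIntegrable (fun x => v x ^ q) volume a b) :
    IntervalIntegrable (fun x => u x * v x) volume a b := by
  have := hpq.ennrealOfReal
  exact (intervalIntegrable_iff_integrableOn_Ioc_of_le hab).2 <|
    (memLp_restrict_Ioc_of_intervalIntegrable_rpow hab hpq.pos hu0 hu hup).integrable_mul
      (memLp_restrict_Ioc_of_intervalIntegrable_rpow hab hpq.symm.pos hv0 hv hvq)

theorem intervalIntegral_mul_le_Lp_mul_Lq_of_nonneg (hab : a ≤ b) (hpq : p.HolderConjugate q)
    (hu0 : ∀ x ∈ Ioc a b, 0 ≤ u x) (hv0 : ∀ x ∈ Ioc a b, 0 ≤ v x)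
    (hu : AEStronglyMeasurable u (volume.restrict (Ioc a b)))
    (hv : AEStronglyMeasurable v (volume.restrict (Ioc a b)))
    (hup : IntervalIntegrable (fun x => u x ^ p) volume a b)
    (hvq : IntervalIntegrable (fun x => v x ^ q) volume a b) :
    ∫ x in a..b, u x * v x ≤
      (∫ x in a..b, u x ^ p) ^ (1 / p) * (∫ x in a..b, v x ^ q) ^ (1 / q) := by
  simp only [integral_of_le hab]
  exact integral_mul_le_Lp_mul_Lq_of_nonneg hpq
    ((ae_restrict_iff' measurableSet_Ioc).2 (ae_of_all _ hu0))
    ((ae_restrict_iff' measurableSet_Ioc).2 (ae_of_all _ hv0))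
    (memLp_restrict_Ioc_of_intervalIntegrable_rpow hab hpq.pos hu0 hu hup)
    (memLp_restrict_Ioc_of_intervalIntegrable_rpow hab hpq.symm.pos hv0 hv hvq)

end Holder

theorem abs_intervalIntegral_le_rpow_mul_rpow {f : ℝ → ℝ} {a b p : ℝ} (hab : a ≤ b)
    (hp : 1 ≤ p) (hf : IntervalIntegrable f volume a b)
    (hfp : IntervalIntegrable (fun x => |f x| ^ p) volume a b) :
    |∫ x in a..b, f x| ≤ (b - a) ^ ((p - 1) / p) * (∫ x in a..b, |f x| ^ p) ^ (1 / p) := by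
  refine (abs_integral_le_integral_abs hab).trans ?_
  rcases hp.eq_or_lt with rfl | hp
  · simp
  have hconj := (Real.HolderConjugate.conjExponent hp).symm
  have hholder := intervalIntegral_mul_le_Lp_mul_Lq_of_nonneg hab hconj
    (fun _ _ => zero_le_one) (fun x _ => abs_nonneg (f x)) aestronglyMeasurable_const
    ((intervalIntegrable_iff_integrableOn_Ioc_of_le hab).1 hf).1.norm
    (by simp) hfp
  simpa only [one_mul, Real.one_rpow, intervalIntegral.integral_const, smul_eq_mul, mul_one,
    Real.conjExponent, one_div_div] using hholder

theorem rpow_abs_intervalIntegral_le {f : ℝ → ℝ} {a b p β : ℝ} (hab : a ≤ b)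
    (hp : 1 ≤ p) (hβ : 0 ≤ β) (hf : IntervalIntegrable f volume a b)
    (hfp : IntervalIntegrable (fun x => |f x| ^ p) volume a b) :
    |∫ x in a..b, f x| ^ β ≤
      (b - a) ^ ((p - 1) / p * β) * (∫ x in a..b, |f x| ^ p) ^ (1 / p * β) := by
  have hba : 0 ≤ b - a := sub_nonneg.2 hab
  have hI : 0 ≤ ∫ x in a..b, |f x| ^ p := integral_nonneg hab fun _ _ => by positivity
  calc |∫ x in a..b, f x| ^ β
      ≤ ((b - a) ^ ((p - 1) / p) * (∫ x in a..b, |f x| ^ p) ^ (1 / p)) ^ β := by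
        gcongr
        exact abs_intervalIntegral_le_rpow_mul_rpow hab hp hf hfp
    _ = _ := by
      rw [Real.mul_rpow (Real.rpow_nonneg hba _) (Real.rpow_nonneg hI _), ← Real.rpow_mul hba,
        ← Real.rpow_mul hI]

theorem Real.holderConjugate_add_div_div {α β : ℝ} (hα : 0 < α) (hβ : 0 < β) :
    ((α + β) / β).HolderConjugate ((α + β) / α) := by
  rw [Real.holderConjugate_iff, inv_div, inv_div, lt_div_iff₀ hβ]
  exact ⟨by linarith, by field_simp; ring⟩

theorem opial_integral_le_holder_bound {f f' : ℝ → ℝ} {a b α β : ℝ} (hab : a ≤ b)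
    (hα : 0 < α) (hβ : 0 < β) (hαβ : 1 ≤ α + β) (hf' : IntervalIntegrable f' volume a b)
    (hf'p : IntervalIntegrable (fun x => |f' x| ^ (α + β)) volume a b)
    (hf : ∀ x ∈ Icc a b, f x = ∫ t in a..x, f' t) :
    ∫ x in a..b, |f x| ^ β * |f' x| ^ α ≤
      (∫ x in a..b, (x - a) ^ (α + β - 1)) ^ (β / (α + β)) *
        (∫ x in a..b, (∫ t in a..x, |f' t| ^ (α + β)) ^ (β / α) * |f' x| ^ (α + β)) ^
          (α / (α + β)) := by
  set p := α + β
  have hp : 0 < p := by positivity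
  set F : ℝ → ℝ := fun x => ∫ t in a..x, |f' t| ^ p
  have hF0 : ∀ x ∈ Icc a b, 0 ≤ F x := fun x hx =>
    integral_nonneg hx.1 fun t _ => Real.rpow_nonneg (abs_nonneg _) _
  have hFcont : ContinuousOn F (uIcc a b) :=
    continuousOn_primitive_interval ((intervalIntegrable_iff' (μ := volume)).1 hf'p)
  set u : ℝ → ℝ := fun x => (x - a) ^ ((p - 1) / p * β)
  set v : ℝ → ℝ := fun x => F x ^ (1 / p * β) * |f' x| ^ α
  have hpointwise : ∀ x ∈ Icc a b, |f x| ^ β ≤ u x * F x ^ (1 / p * β) := fun x hx =>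
    have hsub : uIcc a x ⊆ uIcc a b := uIcc_subset_uIcc_left (by rwa [uIcc_of_le hab] at *)
    hf x hx ▸
      rpow_abs_intervalIntegral_le hx.1 hαβ hβ.le (hf'.mono_set hsub) (hf'p.mono_set hsub)
  have hconj : (p / β).HolderConjugate (p / α) := Real.holderConjugate_add_div_div hα hβ
  have hu_eq : EqOn (fun x => u x ^ (p / β)) (fun x => (x - a) ^ (p - 1)) (uIcc a b) := by
    intro x hx
    rw [uIcc_of_le hab] at hx
    simp only [u, ← Real.rpow_mul (sub_nonneg.2 hx.1)]
    congr 1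
    field_simp
  have hv_eq :
      EqOn (fun x => v x ^ (p / α)) (fun x => F x ^ (β / α) * |f' x| ^ p) (uIcc a b) := by
    intro x hx
    rw [uIcc_of_le hab] at hx
    simp only [v, Real.mul_rpow (Real.rpow_nonneg (hF0 x hx) _) (Real.rpow_nonneg (abs_nonneg _) _),
      ← Real.rpow_mul (hF0 x hx), ← Real.rpow_mul (abs_nonneg _)]
    congr 2 <;> field_simp
  have hu0 : ∀ x ∈ Ioc a b, 0 ≤ u x := fun x hx => Real.rpow_nonneg (sub_nonneg.2 hx.1.le) _
  have hv0 : ∀ x ∈ Ioc a b, 0 ≤ v x := fun x hx =>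
    mul_nonneg (Real.rpow_nonneg (hF0 x (Ioc_subset_Icc_self hx)) _) (by positivity)
  have hu_cont : Continuous u := by
    have : 0 ≤ (p - 1) / p * β := by have := sub_nonneg.2 hαβ; positivity
    fun_prop (disch := assumption)
  have hu_meas : AEStronglyMeasurable u (volume.restrict (Ioc a b)) :=
    hu_cont.aestronglyMeasurable
  have hFpow_cont : ∀ r : ℝ, 0 ≤ r → ContinuousOn (fun x => F x ^ r) (uIcc a b) :=
    fun r hr => hFcont.rpow_const (p := r) fun _ _ => Or.inr hr
  have hv_meas : AEStronglyMeasurable v (volume.restrict (Ioc a b)) := by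
    have hf'_meas := ((intervalIntegrable_iff_integrableOn_Ioc_of_le hab).1 hf').1
    refine .mul (((hFpow_cont _ (by positivity)).mono ?_).aestronglyMeasurable measurableSet_Ioc)
      ((Real.continuous_rpow_const hα.le).comp_aestronglyMeasurable hf'_meas.norm)
    exact uIcc_of_le hab ▸ Ioc_subset_Icc_self
  have hup : IntervalIntegrable (fun x => u x ^ (p / β)) volume a b :=
    (hu_cont.rpow_const fun _ => Or.inr (by positivity)).intervalIntegrable a b
  have hvq : IntervalIntegrable (fun x => v x ^ (p / α)) volume a b :=
    ((hf'p.continuousOn_mul (hFpow_cont _ (by positivity))).congr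
      (hv_eq.symm.mono uIoc_subset_uIcc))
  calc ∫ x in a..b, |f x| ^ β * |f' x| ^ α ≤ ∫ x in a..b, u x * v x := by
        simp only [integral_of_le hab]
        refine integral_mono_of_nonneg (ae_of_all _ fun x => by positivity) ?_ ?_
        · exact (intervalIntegrable_iff_integrableOn_Ioc_of_le hab).1
            (intervalIntegrable_mul_of_holderConjugate hab hconj hu0 hv0 hu_meas hv_meas hup hvq)
        · filter_upwards [ae_restrict_mem measurableSet_Ioc] with x hx
          have := hpointwise x (Ioc_subset_Icc_self hx)
          simp only [v, ← mul_assoc]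
          gcongr
    _ ≤ (∫ x in a..b, u x ^ (p / β)) ^ (1 / (p / β)) *
          (∫ x in a..b, v x ^ (p / α)) ^ (1 / (p / α)) :=
        intervalIntegral_mul_le_Lp_mul_Lq_of_nonneg hab hconj hu0 hv0 hu_meas hv_meas hup hvq
    _ = _ := by rw [integral_congr hu_eq, integral_congr hv_eq, one_div_div, one_div_div]

theorem opial_power_unweighted_general (a b α β : ℝ) (hab : a < b)
    (hα : 0 < α) (hβ : 0 < β) (hαβ : 1 ≤ α + β)
    (f f' : ℝ → ℝ)
    (hf' : IntervalIntegrable f' MeasureTheory.volume a b)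
    (hf'p : IntervalIntegrable (fun x => |f' x| ^ (α + β)) MeasureTheory.volume a b)
    (hf : ∀ x ∈ Set.Icc a b, f x = ∫ t in a..x, f' t) :
    ∫ x in a..b, |f x| ^ β * |f' x| ^ α ≤
      (α / (α + β)) ^ (α / (α + β)) *
        (∫ x in a..b, (x - a) ^ (α + β - 1)) ^ (β / (α + β)) *
        ∫ x in a..b, |f' x| ^ (α + β) := by
  set E := ∫ x in a..b, |f' x| ^ (α + β)
  have hE : 0 ≤ E := integral_nonneg hab.le fun _ _ => by positivity
  have hprimitive :
      ∫ x in a..b, (∫ t in a..x, |f' t| ^ (α + β)) ^ (β / α) * |f' x| ^ (α + β) ≤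
        E ^ ((α + β) / α) * (α / (α + β)) := by
    have h := intervalIntegral_rpow_primitive_mul_le hab.le (div_pos hβ hα).le
      (fun x => by positivity) hf'p
    rwa [show β / α + 1 = (α + β) / α by field_simp; ring, div_div_eq_mul_div,
      mul_div_assoc] at h
  have hweight : 0 ≤ ∫ x in a..b, (x - a) ^ (α + β - 1) :=
    integral_nonneg hab.le fun x hx => Real.rpow_nonneg (sub_nonneg.2 hx.1) _
  calc ∫ x in a..b, |f x| ^ β * |f' x| ^ α
      ≤ (∫ x in a..b, (x - a) ^ (α + β - 1)) ^ (β / (α + β)) *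
        (∫ x in a..b, (∫ t in a..x, |f' t| ^ (α + β)) ^ (β / α) * |f' x| ^ (α + β)) ^
          (α / (α + β)) := opial_integral_le_holder_bound hab.le hα hβ hαβ hf' hf'p hf
    _ ≤ (∫ x in a..b, (x - a) ^ (α + β - 1)) ^ (β / (α + β)) *
        (E ^ ((α + β) / α) * (α / (α + β))) ^ (α / (α + β)) := by
      gcongr
      exact integral_nonneg hab.le fun x hx => mul_nonneg
        (Real.rpow_nonneg (integral_nonneg hx.1 fun _ _ => by positivity) _) (by positivity)
    _ = _ := by
      rw [Real.mul_rpow (Real.rpow_nonneg hE _) (by positivity), ← Real.rpow_mul hE,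
        div_mul_div_cancel₀' (by positivity), div_self hα.ne', Real.rpow_one]
      ring

/-- Unweighted one-dimensional Opial-type inequality: for `α, β > 0` with `α + β ≥ 1`
and `f` absolutely continuous on `[a,b]` with `f a = 0`,
`∫ₐᵇ |f|^β |f'|^α ≤ (α/(α+β))^(α/(α+β)) (∫ₐᵇ (x−a)^(α+β−1) dx)^(β/(α+β)) ∫ₐᵇ |f'|^(α+β)`. -/
theorem opial_power_unweighted (a b α β : ℝ) (hab : a < b)
    (hα : 0 < α) (hβ : 0 < β) (hαβ : 1 ≤ α + β)
    (f f' : ℝ → ℝ)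
    (hf' : IntervalIntegrable f' MeasureTheory.volume a b)
    (hf'p : IntervalIntegrable (fun x => |f' x| ^ (α + β)) MeasureTheory.volume a b)
    (hf : ∀ x ∈ Set.Icc a b, f x = ∫ t in a..x, f' t)
    (hfa : f a = 0) :
    ∫ x in a..b, |f x| ^ β * |f' x| ^ α ≤
      (α / (α + β)) ^ (α / (α + β)) *
        (∫ x in a..b, (x - a) ^ (α + β - 1)) ^ (β / (α + β)) *
        ∫ x in a..b, |f' x| ^ (α + β) :=
  opial_power_unweighted_general a b α β hab hα hβ hαβ f f' hf' hf'p hf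
end

section
/- Let α, β > 0 with α + β ≥ 1 and let f : [a,b] → ℝ be absolutely continuous with f(b) = 0. Then ∫ₐᵇ |f(x)|^β |f'(x)|^α dx ≤ (α/(α+β))^{α/(α+β)} · [(b−a)^{α+β}/(α+β)]^{β/(α+β)} · ∫ₐᵇ |f'(x)|^{α+β} dx. -/
/-!
Write `p = α + β` and `G x = ∫ₓᵇ |f'|^p`. Hölder's inequality on `[x, b]` gives
`|f x| ≤ (b - x)^(1 - 1/p) G(x)^(1/p)`, so the integrand is at most
`((b - x)^(p-1))^(β/p) (G^(β/α) |f'|^p)^(α/p)`, and a second Hölder inequality, with exponents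
`p/β` and `p/α`, bounds its integral by `((b-a)^p/p)^(β/p) (∫ₐᵇ G^(β/α) |f'|^p)^(α/p)`.
Since `G` is absolutely continuous with `G' = -|f'|^p` a.e., the last integral is
`G(a)^(p/α) / (p/α)` by the fundamental theorem of calculus for absolutely continuous functions.
-/

open MeasureTheory Set Filter

theorem MeasureTheory.integral_rpow_mul_rpow_le {α : Type*} [MeasurableSpace α] {μ : Measure α}
    {f g : α → ℝ} {p q : ℝ} (hf : 0 ≤ᵐ[μ] f) (hg : 0 ≤ᵐ[μ] g) (hfi : Integrable f μ)
    (hgi : Integrable g μ) (hp : 0 ≤ p) (hq : 0 ≤ q) (hpq : p + q = 1) :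
    ∫ a, f a ^ p * g a ^ q ∂μ ≤ (∫ a, f a ∂μ) ^ p * (∫ a, g a ∂μ) ^ q := by
  have hmeas : AEStronglyMeasurable (fun a => f a ^ p * g a ^ q) μ :=
    ((Real.continuous_rpow_const hp).comp_aestronglyMeasurable hfi.1).mul
      ((Real.continuous_rpow_const hq).comp_aestronglyMeasurable hgi.1)
  have hnonneg : 0 ≤ᵐ[μ] fun a => f a ^ p * g a ^ q := by
    filter_upwards [hf, hg] with a ha hb
    exact mul_nonneg (Real.rpow_nonneg ha p) (Real.rpow_nonneg hb q)
  rw [integral_eq_lintegral_of_nonneg_ae hnonneg hmeas,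
    integral_eq_lintegral_of_nonneg_ae hf hfi.1, integral_eq_lintegral_of_nonneg_ae hg hgi.1,
    ENNReal.toReal_rpow, ENNReal.toReal_rpow, ← ENNReal.toReal_mul]
  refine ENNReal.toReal_mono (ENNReal.mul_ne_top
    (ENNReal.rpow_ne_top_of_nonneg hp hfi.lintegral_lt_top.ne)
    (ENNReal.rpow_ne_top_of_nonneg hq hgi.lintegral_lt_top.ne)) ?_
  calc ∫⁻ a, ENNReal.ofReal (f a ^ p * g a ^ q) ∂μ
      = ∫⁻ a, ENNReal.ofReal (f a) ^ p * ENNReal.ofReal (g a) ^ q ∂μ := by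
        refine lintegral_congr_ae ?_
        filter_upwards [hf, hg] with a ha hb
        rw [ENNReal.ofReal_mul (Real.rpow_nonneg ha p), ENNReal.ofReal_rpow_of_nonneg ha hp,
          ENNReal.ofReal_rpow_of_nonneg hb hq]
    _ ≤ _ := ENNReal.lintegral_mul_norm_pow_le hfi.1.aemeasurable.ennreal_ofReal
        hgi.1.aemeasurable.ennreal_ofReal hp hq hpq

theorem MeasureTheory.Integrable.rpow_mul_rpow {α : Type*} [MeasurableSpace α] {μ : Measure α}
    {f g : α → ℝ} {p q : ℝ} (hf : 0 ≤ᵐ[μ] f) (hg : 0 ≤ᵐ[μ] g) (hfi : Integrable f μ)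
    (hgi : Integrable g μ) (hp : 0 ≤ p) (hq : 0 ≤ q) (hpq : p + q = 1) :
    Integrable (fun a => f a ^ p * g a ^ q) μ := by
  refine ((hfi.const_mul p).add (hgi.const_mul q)).mono'
    (((Real.continuous_rpow_const hp).comp_aestronglyMeasurable hfi.1).mul
      ((Real.continuous_rpow_const hq).comp_aestronglyMeasurable hgi.1)) ?_
  filter_upwards [hf, hg] with a ha hb
  rw [Real.norm_of_nonneg (mul_nonneg (Real.rpow_nonneg ha p) (Real.rpow_nonneg hb q))]
  exact Real.geom_mean_le_arith_mean2_weighted hp hq ha hb hpq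

theorem LipschitzOnWith.comp_absolutelyContinuousOnInterval {X Y : Type*} [PseudoMetricSpace X]
    [PseudoMetricSpace Y] {φ : X → Y} {K : NNReal} {s : Set X} {f : ℝ → X} {a b : ℝ}
    (hφ : LipschitzOnWith K φ s) (hf : AbsolutelyContinuousOnInterval f a b)
    (hfs : MapsTo f (uIcc a b) s) : AbsolutelyContinuousOnInterval (φ ∘ f) a b := by
  refine squeeze_zero' (Eventually.of_forall fun _ => Finset.sum_nonneg fun _ _ => dist_nonneg)
    ?_ (by simpa using Tendsto.const_mul (K : ℝ) (show Tendsto _ _ _ from hf))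
  rw [eventually_inf_principal]
  filter_upwards with E hE
  rw [Finset.mul_sum]
  exact Finset.sum_le_sum fun i hi =>
    hφ.dist_le_mul _ (hfs (hE.1 i hi).1) _ (hfs (hE.1 i hi).2)

theorem IntervalIntegrable.absolutelyContinuousOnInterval_integral_left {g : ℝ → ℝ} {a b : ℝ}
    (hg : IntervalIntegrable g volume a b) :
    AbsolutelyContinuousOnInterval (fun x => ∫ t in x..b, g t) a b := by
  simpa only [intervalIntegral.integral_symm b] using
    (hg.absolutelyContinuousOnInterval_intervalIntegral right_mem_uIcc).fun_neg

namespace intervalIntegral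

variable {f g h : ℝ → ℝ} {a b p q : ℝ}

theorem integral_le_rpow_mul_rpow_of_le (hab : a ≤ b) (hf : ∀ x ∈ Ioc a b, 0 ≤ f x)
    (hg : ∀ x ∈ Ioc a b, 0 ≤ g x) (hfi : IntervalIntegrable f volume a b)
    (hgi : IntervalIntegrable g volume a b) (hp : 0 ≤ p) (hq : 0 ≤ q) (hpq : p + q = 1)
    (hh : ∀ x ∈ Ioc a b, 0 ≤ h x) (hhfg : ∀ x ∈ Ioc a b, h x ≤ f x ^ p * g x ^ q) :
    ∫ x in a..b, h x ≤ (∫ x in a..b, f x) ^ p * (∫ x in a..b, g x) ^ q := by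
  have hf' := ae_restrict_of_forall_mem (μ := volume) measurableSet_Ioc hf
  have hg' := ae_restrict_of_forall_mem (μ := volume) measurableSet_Ioc hg
  simp only [integral_of_le hab]
  calc ∫ x in Ioc a b, h x ≤ ∫ x in Ioc a b, f x ^ p * g x ^ q :=
        integral_mono_of_nonneg (ae_restrict_of_forall_mem measurableSet_Ioc hh)
          (hfi.1.rpow_mul_rpow hf' hg' hgi.1 hp hq hpq)
          (ae_restrict_of_forall_mem measurableSet_Ioc hhfg)
    _ ≤ _ := integral_rpow_mul_rpow_le hf' hg' hfi.1 hgi.1 hp hq hpq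

theorem abs_integral_le_rpow_mul_integral_abs_rpow (hab : a ≤ b) (hp : 1 ≤ p)
    (hfp : IntervalIntegrable (fun x => |f x| ^ p) volume a b) :
    |∫ x in a..b, f x| ≤ (b - a) ^ (1 - p⁻¹) * (∫ x in a..b, |f x| ^ p) ^ p⁻¹ := by
  have hp0 : p ≠ 0 := by positivity
  calc |∫ x in a..b, f x| ≤ ∫ x in a..b, |f x| := abs_integral_le_integral_abs hab
    _ ≤ (∫ _ in a..b, (1 : ℝ)) ^ (1 - p⁻¹) * (∫ x in a..b, |f x| ^ p) ^ p⁻¹ :=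
        integral_le_rpow_mul_rpow_of_le hab (fun _ _ => zero_le_one) (fun _ _ => by positivity)
          intervalIntegrable_const hfp (sub_nonneg.2 (inv_le_one_of_one_le₀ hp))
          (inv_nonneg.2 (by linarith)) (sub_add_cancel _ _) (fun _ _ => abs_nonneg _)
          fun x _ => by rw [Real.one_rpow, one_mul, Real.rpow_rpow_inv (abs_nonneg _) hp0]
    _ = (b - a) ^ (1 - p⁻¹) * (∫ x in a..b, |f x| ^ p) ^ p⁻¹ := by rw [integral_one]

theorem integral_sub_rpow (hp : 0 < p) :
    ∫ x in a..b, (b - x) ^ (p - 1) = (b - a) ^ p / p := by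
  rw [integral_comp_sub_left (fun x => x ^ (p - 1)), sub_self,
    integral_rpow (Or.inl (by linarith)), sub_add_cancel, Real.zero_rpow hp.ne', sub_zero]

theorem integral_rpow_mul_eq_rpow_div (hg : IntervalIntegrable g volume a b) {c : ℝ}
    (hc : 0 ≤ c) :
    ∫ x in a..b, (∫ t in x..b, g t) ^ c * g x = (∫ t in a..b, g t) ^ (c + 1) / (c + 1) := by
  set G : ℝ → ℝ := fun x => ∫ t in x..b, g t with hG_def
  have hG : G = fun x => -∫ t in b..x, g t := funext fun x => integral_symm _ _
  have hGac : AbsolutelyContinuousOnInterval G a b :=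
    hg.absolutelyContinuousOnInterval_integral_left
  have hc1 : (1 : ℝ) ≤ c + 1 := by linarith
  obtain ⟨M, hM⟩ := hGac.exists_bound
  obtain ⟨K, hK⟩ := (Real.contDiff_rpow_const_of_le (n := 1) (by exact_mod_cast hc1)).contDiffOn
    |>.exists_lipschitzOnWith one_ne_zero (convex_Icc (-M) M) isCompact_Icc
  have hFac : AbsolutelyContinuousOnInterval (fun x => G x ^ (c + 1)) a b :=
    hK.comp_absolutelyContinuousOnInterval hGac fun x hx => abs_le.1 (hM x hx)
  have hderiv : ∀ᵐ x, x ∈ uIoc a b →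
      deriv (fun x => G x ^ (c + 1)) x = -((c + 1) * (G x ^ c * g x)) := by
    filter_upwards [hg.ae_hasDerivAt_integral] with x hx hxab
    have hGx : HasDerivAt G (-g x) x := hG ▸ (hx (uIoc_subset_uIcc hxab) b right_mem_uIcc).neg
    rw [(hGx.rpow_const (Or.inr hc1)).deriv, add_sub_cancel_right]
    ring
  have hftc := hFac.integral_deriv_eq_sub
  rw [integral_congr_ae hderiv, integral_neg, integral_const_mul] at hftc
  simp only [hG_def, integral_same, Real.zero_rpow (by linarith : c + 1 ≠ 0)] at hftc
  field_simp
  linarith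

end intervalIntegral

theorem opial_integrand_le {α β y z d G : ℝ} (hα : 0 < α) (hβ : 0 < β) (hy : 0 ≤ y) (hz : 0 ≤ z)
    (hd : 0 ≤ d) (hG : 0 ≤ G) (hyG : y ≤ d ^ (1 - (α + β)⁻¹) * G ^ (α + β)⁻¹) :
    y ^ β * z ^ α ≤
      (d ^ (α + β - 1)) ^ (β / (α + β)) * (G ^ (β / α) * z ^ (α + β)) ^ (α / (α + β)) := by
  have hp : 0 < α + β := by positivity
  calc y ^ β * z ^ α ≤ (d ^ (1 - (α + β)⁻¹) * G ^ (α + β)⁻¹) ^ β * z ^ α := by gcongr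
    _ = _ := by
        rw [Real.mul_rpow (by positivity) (by positivity),
          Real.mul_rpow (by positivity) (by positivity), ← Real.rpow_mul hd, ← Real.rpow_mul hd,
          ← Real.rpow_mul hG, ← Real.rpow_mul hG, ← Real.rpow_mul hz,
          show (1 - (α + β)⁻¹) * β = (α + β - 1) * (β / (α + β)) by field_simp,
          show (α + β)⁻¹ * β = β / α * (α / (α + β)) by field_simp,
          show (α + β) * (α / (α + β)) = α by field_simp]
        ring

theorem Real.rpow_div_self_rpow_inv {x r : ℝ} (hx : 0 ≤ x) (hr : 0 < r) :
    (x ^ r / r) ^ r⁻¹ = r⁻¹ ^ r⁻¹ * x := by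
  rw [Real.div_rpow (Real.rpow_nonneg hx r) hr.le, Real.rpow_rpow_inv hx hr.ne',
    Real.inv_rpow hr.le, div_eq_inv_mul]

open intervalIntegral in
theorem opial_power_right_general (a b α β : ℝ) (hab : a < b)
    (hα : 0 < α) (hβ : 0 < β) (hαβ : 1 ≤ α + β)
    (f f' : ℝ → ℝ)
    (hf'p : IntervalIntegrable (fun x => |f' x| ^ (α + β)) MeasureTheory.volume a b)
    (hf : ∀ x ∈ Set.Icc a b, f x = ∫ t in b..x, f' t) :
    ∫ x in a..b, |f x| ^ β * |f' x| ^ α ≤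
      (α / (α + β)) ^ (α / (α + β)) *
        ((b - a) ^ (α + β) / (α + β)) ^ (β / (α + β)) *
        ∫ x in a..b, |f' x| ^ (α + β) := by
  set p := α + β
  have hp : 0 < p := by positivity
  set G : ℝ → ℝ := fun x => ∫ t in x..b, |f' t| ^ p
  have hG : ∀ x ∈ Ioc a b, 0 ≤ G x := fun x hx => integral_nonneg hx.2 fun _ _ => by positivity
  have hf_le : ∀ x ∈ Ioc a b, |f x| ≤ (b - x) ^ (1 - p⁻¹) * G x ^ p⁻¹ := fun x hx => by
    rw [hf x (Ioc_subset_Icc_self hx), integral_symm, abs_neg]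
    exact abs_integral_le_rpow_mul_integral_abs_rpow hx.2 hαβ
      (hf'p.mono_set (uIcc_subset_uIcc (Icc_subset_uIcc (Ioc_subset_Icc_self hx)) right_mem_uIcc))
  have hU : IntervalIntegrable (fun x => (b - x) ^ (p - 1)) volume a b :=
    ((continuous_const.sub continuous_id).rpow_const fun _ => Or.inr (by linarith))
      |>.intervalIntegrable _ _
  have hV : IntervalIntegrable (fun x => G x ^ (β / α) * |f' x| ^ p) volume a b :=
    hf'p.continuousOn_mul (hf'p.absolutelyContinuousOnInterval_integral_left.continuousOn
      |>.rpow_const fun _ _ => Or.inr (by positivity))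
  calc ∫ x in a..b, |f x| ^ β * |f' x| ^ α
      ≤ (∫ x in a..b, (b - x) ^ (p - 1)) ^ (β / p) *
          (∫ x in a..b, G x ^ (β / α) * |f' x| ^ p) ^ (α / p) :=
        integral_le_rpow_mul_rpow_of_le hab.le (fun x hx => Real.rpow_nonneg (sub_nonneg.2 hx.2) _)
          (fun x hx => mul_nonneg (Real.rpow_nonneg (hG x hx) _) (by positivity)) hU hV
          (by positivity) (by positivity) (by field_simp; ring) (fun _ _ => by positivity)
          fun x hx => opial_integrand_le hα hβ (abs_nonneg _) (abs_nonneg _) (sub_nonneg.2 hx.2)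
            (hG x hx) (hf_le x hx)
    _ = ((b - a) ^ p / p) ^ (β / p) *
          ((∫ x in a..b, |f' x| ^ p) ^ (p / α) / (p / α)) ^ (p / α)⁻¹ := by
        rw [integral_sub_rpow hp, integral_rpow_mul_eq_rpow_div hf'p (by positivity),
          show β / α + 1 = p / α by field_simp; ring, inv_div]
    _ = _ := by
        rw [Real.rpow_div_self_rpow_inv (integral_nonneg hab.le fun _ _ => by positivity)
          (by positivity), inv_div]
        ring

/-- Right-endpoint one-dimensional Opial-type inequality: for `α, β > 0` with
`α + β ≥ 1` and `f` absolutely continuous on `[a,b]` with `f b = 0`,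
`∫ₐᵇ |f|^β |f'|^α ≤ (α/(α+β))^(α/(α+β)) ((b−a)^(α+β)/(α+β))^(β/(α+β)) ∫ₐᵇ |f'|^(α+β)`. -/
theorem opial_power_right (a b α β : ℝ) (hab : a < b)
    (hα : 0 < α) (hβ : 0 < β) (hαβ : 1 ≤ α + β)
    (f f' : ℝ → ℝ)
    (hf' : IntervalIntegrable f' MeasureTheory.volume a b)
    (hf'p : IntervalIntegrable (fun x => |f' x| ^ (α + β)) MeasureTheory.volume a b)
    (hf : ∀ x ∈ Set.Icc a b, f x = ∫ t in b..x, f' t)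
    (hfb : f b = 0) :
    ∫ x in a..b, |f x| ^ β * |f' x| ^ α ≤
      (α / (α + β)) ^ (α / (α + β)) *
        ((b - a) ^ (α + β) / (α + β)) ^ (β / (α + β)) *
        ∫ x in a..b, |f' x| ^ (α + β) :=
  opial_power_right_general a b α β hab hα hβ hαβ f f' hf'p hf
end

section
/- Let F : [0,∞) → ℝ be C¹ with F(0)=0 and F' nonnegative and increasing; let φ : [a,b] → ℝ be C¹ with φ(a)=0 and φ' > 0 on [a,b]; let ϕ : [0,∞) → [0,∞) be convex, increasing, with ϕ(0)=0; and let f : [a,b] → ℝ be C¹ with f(a)=0. Then ∫ₐᵇ F'(φ(x) ϕ(|f(x)|/φ(x))) φ'(x) ϕ(|f'(x)|/φ'(x)) dx ≤ F(∫ₐᵇ φ'(x) ϕ(|f'(x)|/φ'(x)) dx). -/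
/-!
Put `G x = ∫ₐˣ φ' ϕ(|f'|/φ')`. Since `φ x = ∫ₐˣ φ'` and `|f x| ≤ ∫ₐˣ |f'|`, Jensen's inequality for
the probability measure `φ' dt / φ x` on `[a, x]` gives `φ x ϕ(|f x|/φ x) ≤ G x`. As `F'` is
increasing, the integrand is therefore at most `F'(G x) G'(x)`, whose integral is
`F (G b) - F 0 = F (G b)`.
-/

open Set Filter Topology MeasureTheory intervalIntegral

namespace ConvexOn

variable {ϕ : ℝ → ℝ} {y : ℝ}

theorem continuousWithinAt_Ici_of_monotoneOn (hconv : ConvexOn ℝ (Ici y) ϕ)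
    (hmono : MonotoneOn ϕ (Ici y)) : ContinuousWithinAt ϕ (Ici y) y := by
  have hy1 : y + 1 ∈ Ici y := by simp
  -- on `[y, y + 1]` the graph lies between the horizontal line at `ϕ y` and the chord
  have hchord : ∀ᶠ x in 𝓝[Ici y] y, ϕ x ≤ ϕ y + (x - y) * (ϕ (y + 1) - ϕ y) := by
    filter_upwards [self_mem_nhdsWithin, nhdsWithin_le_nhds (gt_mem_nhds (lt_add_one y))]
      with x (hx : y ≤ x) hx1
    rcases hx.eq_or_lt with rfl | hyx
    · simp
    have := hconv.secant_mono self_mem_Ici hx hy1 hyx.ne' (by simp) hx1.le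
    rw [add_sub_cancel_left, div_one, div_le_iff₀ (sub_pos.2 hyx)] at this
    linarith
  have hlim : Tendsto (fun x ↦ ϕ y + (x - y) * (ϕ (y + 1) - ϕ y)) (𝓝[Ici y] y) (𝓝 (ϕ y)) := by
    have hcont : Continuous fun x ↦ ϕ y + (x - y) * (ϕ (y + 1) - ϕ y) := by fun_prop
    simpa using (hcont.tendsto y).mono_left nhdsWithin_le_nhds
  exact tendsto_of_tendsto_of_tendsto_of_le_of_le' tendsto_const_nhds hlim
    (eventually_nhdsWithin_of_forall fun x hx ↦ hmono self_mem_Ici hx hx) hchord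

theorem continuousOn_Ici_of_monotoneOn (hconv : ConvexOn ℝ (Ici y) ϕ)
    (hmono : MonotoneOn ϕ (Ici y)) : ContinuousOn ϕ (Ici y) :=
  hconv.continuousOn_Ici (hconv.continuousWithinAt_Ici_of_monotoneOn hmono)

/-- The right derivative at an interior point is a nonnegative subgradient; at the endpoint the
horizontal line works. -/
theorem exists_nonneg_affine_le_of_monotoneOn (hconv : ConvexOn ℝ (Ici y) ϕ)
    (hmono : MonotoneOn ϕ (Ici y)) {u : ℝ} (hu : y ≤ u) :
    ∃ c, 0 ≤ c ∧ ∀ s, y ≤ s → ϕ u + c * (s - u) ≤ ϕ s := by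
  rcases hu.eq_or_lt with rfl | hyu
  · exact ⟨0, le_rfl, fun s hs ↦ by simpa using hmono self_mem_Ici hs hs⟩
  have hu_int : u ∈ interior (Ici y) := by simpa using hyu
  set c := derivWithin ϕ (Ioi u) u
  have hleft : ∀ s, y ≤ s → s < u → slope ϕ s u ≤ c := fun s hs hsu ↦
    (hconv.slope_le_leftDeriv_of_mem_interior hs hu_int hsu).trans
      (hconv.leftDeriv_le_rightDeriv_of_mem_interior hu_int)
  refine ⟨c, ?_, fun s hs ↦ ?_⟩
  · refine le_trans ?_ (hleft y le_rfl hyu)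
    rw [slope_def_field]
    exact div_nonneg (sub_nonneg.2 (hmono self_mem_Ici hu hyu.le)) (sub_pos.2 hyu).le
  rcases lt_trichotomy s u with hsu | rfl | hus
  · have := hleft s hs hsu
    rw [slope_def_field, div_le_iff₀ (sub_pos.2 hsu)] at this
    linarith
  · simp
  · have := hconv.rightDeriv_le_slope_of_mem_interior hu_int (mem_Ici.2 hs) hus
    rw [slope_def_field, le_div_iff₀ (sub_pos.2 hus)] at this
    linarith

/-- Jensen's inequality for the perspective `(p, q) ↦ p * ϕ (|q| / p)` of `ϕ`, weighted by `p`: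
integrate a supporting line of `ϕ` at `|∫ g| / ∫ p` and use `|∫ g| ≤ ∫ |g|`. -/
theorem perspective_integral_le_integral_perspective (hconv : ConvexOn ℝ (Ici 0) ϕ)
    (hmono : MonotoneOn ϕ (Ici 0)) {a b : ℝ} (hab : a < b) {p g : ℝ → ℝ}
    (hp : ∀ t ∈ Icc a b, 0 < p t) (hp_int : IntervalIntegrable p volume a b)
    (hg_int : IntervalIntegrable g volume a b)
    (hpg_int : IntervalIntegrable (fun t ↦ p t * ϕ (|g t| / p t)) volume a b) :
    (∫ t in a..b, p t) * ϕ (|∫ t in a..b, g t| / ∫ t in a..b, p t) ≤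
      ∫ t in a..b, p t * ϕ (|g t| / p t) := by
  set P := ∫ t in a..b, p t
  have hP : 0 < P :=
    intervalIntegral_pos_of_pos_on hp_int (fun t ht ↦ hp t (Ioo_subset_Icc_self ht)) hab
  set u := |∫ t in a..b, g t| / P
  obtain ⟨c, hc, hsupp⟩ :=
    hconv.exists_nonneg_affine_le_of_monotoneOn hmono (u := u) (by positivity)
  have hline : ∀ t ∈ Icc a b, (ϕ u - c * u) * p t + c * |g t| ≤ p t * ϕ (|g t| / p t) := by
    intro t ht
    have := mul_le_mul_of_nonneg_left
      (hsupp _ (div_nonneg (abs_nonneg (g t)) (hp t ht).le)) (hp t ht).le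
    rw [mul_add, mul_left_comm, mul_sub, mul_div_cancel₀ _ (hp t ht).ne'] at this
    linear_combination this
  have hline_int : IntervalIntegrable (fun t ↦ (ϕ u - c * u) * p t + c * |g t|) volume a b :=
    (hp_int.const_mul _).add (hg_int.abs.const_mul _)
  calc P * ϕ u = (ϕ u - c * u) * P + c * (u * P) := by ring
    _ ≤ (ϕ u - c * u) * P + c * ∫ t in a..b, |g t| := by
      rw [div_mul_cancel₀ _ hP.ne']
      gcongr
      exact abs_integral_le_integral_abs hab.le
    _ = ∫ t in a..b, ((ϕ u - c * u) * p t + c * |g t|) := by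
      rw [integral_add (hp_int.const_mul _) (hg_int.abs.const_mul _),
        intervalIntegral.integral_const_mul, intervalIntegral.integral_const_mul]
    _ ≤ ∫ t in a..b, p t * ϕ (|g t| / p t) := integral_mono_on hab.le hline_int hpg_int hline

theorem perspective_le_integral_perspective_deriv (hconv : ConvexOn ℝ (Ici 0) ϕ)
    (hmono : MonotoneOn ϕ (Ici 0)) {a b : ℝ} {φ φ' f f' : ℝ → ℝ}
    (hφ : ∀ x ∈ Icc a b, HasDerivAt φ (φ' x) x) (hφ'cont : ContinuousOn φ' (Icc a b))
    (hφa : φ a = 0) (hφ'pos : ∀ x ∈ Icc a b, 0 < φ' x)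
    (hf : ∀ x ∈ Icc a b, HasDerivAt f (f' x) x) (hf'cont : ContinuousOn f' (Icc a b))
    (hfa : f a = 0) (hw : IntervalIntegrable (fun t ↦ φ' t * ϕ (|f' t| / φ' t)) volume a b)
    {x : ℝ} (hx : x ∈ Icc a b) :
    φ x * ϕ (|f x| / φ x) ≤ ∫ t in a..x, φ' t * ϕ (|f' t| / φ' t) := by
  rcases hx.1.eq_or_lt with rfl | hax
  · simp [hφa]
  have hsub : uIcc a x ⊆ Icc a b := by
    rw [uIcc_of_le hax.le]
    exact Icc_subset_Icc_right hx.2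
  have hφ'int : IntervalIntegrable φ' volume a x := (hφ'cont.mono hsub).intervalIntegrable
  have hf'int : IntervalIntegrable f' volume a x := (hf'cont.mono hsub).intervalIntegrable
  have hφx : ∫ t in a..x, φ' t = φ x := by
    rw [integral_eq_sub_of_hasDerivAt (fun t ht ↦ hφ t (hsub ht)) hφ'int, hφa, sub_zero]
  have hfx : ∫ t in a..x, f' t = f x := by
    rw [integral_eq_sub_of_hasDerivAt (fun t ht ↦ hf t (hsub ht)) hf'int, hfa, sub_zero]
  have hw' : IntervalIntegrable (fun t ↦ φ' t * ϕ (|f' t| / φ' t)) volume a x :=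
    hw.mono_set (by rwa [uIcc_of_le (hx.1.trans hx.2)])
  simpa only [hφx, hfx] using hconv.perspective_integral_le_integral_perspective hmono hax
    (fun t ht ↦ hφ'pos t (hsub (uIcc_of_le hax.le ▸ ht))) hφ'int hf'int hw'

end ConvexOn

theorem continuousOn_perspective {ϕ : ℝ → ℝ} (hϕ : ContinuousOn ϕ (Ici 0)) {s : Set ℝ}
    {p q : ℝ → ℝ} (hp : ContinuousOn p s) (hq : ContinuousOn q s) (hp0 : ∀ x ∈ s, 0 < p x) :
    ContinuousOn (fun x ↦ p x * ϕ (|q x| / p x)) s :=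
  hp.mul <| hϕ.comp (hq.abs.div hp fun x hx ↦ (hp0 x hx).ne') fun x hx ↦
    div_nonneg (abs_nonneg _) (hp0 x hx).le

/-- Since `0 ≤ h ≤ ∫ₐ w`, continuity of `h` at `a` is automatic. -/
theorem integral_deriv_comp_mul_le_of_le_primitive {a b : ℝ} (hab : a ≤ b) {F F' w h : ℝ → ℝ}
    (hF : ∀ y ∈ Ici (0 : ℝ), HasDerivAt F (F' y) y) (hF'cont : ContinuousOn F' (Ici 0))
    (hF'mono : MonotoneOn F' (Ici 0)) (hw : ContinuousOn w (Icc a b))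
    (hw0 : ∀ x ∈ Icc a b, 0 ≤ w x) (hh : ContinuousOn h (Ioc a b))
    (hh0 : ∀ x ∈ Icc a b, 0 ≤ h x) (hhw : ∀ x ∈ Icc a b, h x ≤ ∫ t in a..x, w t) :
    ∫ x in a..b, F' (h x) * w x ≤ F (∫ t in a..b, w t) - F 0 := by
  set G := fun x ↦ ∫ t in a..x, w t
  have hG0 : ∀ x ∈ Icc a b, 0 ≤ G x := fun x hx ↦
    integral_nonneg hx.1 fun t ht ↦ hw0 t ⟨ht.1, ht.2.trans hx.2⟩
  have hGcont : ContinuousOn G (Icc a b) := by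
    simpa only [uIcc_of_le hab] using continuousOn_primitive_interval
      (hw.integrableOn_Icc.mono_set (uIcc_of_le hab).subset)
  have hGderiv : ∀ x ∈ Ioo (min a b) (max a b), HasDerivWithinAt G (w x) (Ioi x) x := by
    rw [min_eq_left hab, max_eq_right hab]
    intro x hx
    refine (integral_hasDerivAt_right ?_ ?_ ?_).hasDerivWithinAt
    · exact (hw.mono (Icc_subset_Icc_right hx.2.le)).intervalIntegrable_of_Icc hx.1.le
    · exact (hw.mono Ioo_subset_Icc_self).stronglyMeasurableAtFilter isOpen_Ioo x hx
    · exact hw.continuousAt (Icc_mem_nhds hx.1 hx.2)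
  have hGa : G a = 0 := integral_same
  have hhcont : ContinuousOn h (Icc a b) := by
    intro x hx
    rcases hx.1.eq_or_lt with rfl | hax
    · have hha : h a = 0 := le_antisymm (hGa ▸ hhw a hx) (hh0 a hx)
      rw [ContinuousWithinAt, hha]
      exact squeeze_zero' (eventually_nhdsWithin_of_forall hh0)
        (eventually_nhdsWithin_of_forall hhw) (hGa ▸ hGcont a hx)
    · exact (hh x ⟨hax, hx.2⟩).mono_of_mem_nhdsWithin <| mem_of_superset
        (inter_mem_nhdsWithin _ (Ioi_mem_nhds hax)) fun t ht ↦ ⟨ht.2, ht.1.2⟩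
  have hrange : uIcc (G a) (G b) ⊆ Ici 0 := fun y hy ↦
    le_trans (le_min (hG0 a ⟨le_rfl, hab⟩) (hG0 b ⟨hab, le_rfl⟩)) hy.1
  have hFcont : ContinuousOn F (Ici 0) := fun y hy ↦ (hF y hy).continuousAt.continuousWithinAt
  calc ∫ x in a..b, F' (h x) * w x ≤ ∫ x in a..b, (F' ∘ G) x * w x := by
        refine integral_mono_on hab
          (((hF'cont.comp hhcont hh0).mul hw).intervalIntegrable_of_Icc hab)
          (((hF'cont.comp hGcont hG0).mul hw).intervalIntegrable_of_Icc hab) fun x hx ↦ ?_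
        exact mul_le_mul_of_nonneg_right (hF'mono (hh0 x hx) (hG0 x hx) (hhw x hx)) (hw0 x hx)
    _ = (F ∘ G) b - (F ∘ G) a := by
        refine integral_deriv_comp_mul_deriv' (by rwa [uIcc_of_le hab]) hGderiv
          (by rwa [uIcc_of_le hab]) (hFcont.mono hrange)
          (fun y hy ↦ (hF y (hrange (Ioo_subset_Icc_self hy))).hasDerivWithinAt) (hF'cont.mono ?_)
        rintro _ ⟨x, hx, rfl⟩
        exact hG0 x (by rwa [uIcc_of_le hab] at hx)
    _ = F (∫ t in a..b, w t) - F 0 := by rw [Function.comp_apply, Function.comp_apply, hGa]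

theorem rozanova_type_general (a b : ℝ) (hab : a < b)
    (F F' : ℝ → ℝ)
    (hFderiv : ∀ x ∈ Set.Ici (0 : ℝ), HasDerivAt F (F' x) x)
    (hF'cont : ContinuousOn F' (Set.Ici (0 : ℝ)))
    (hF0 : F 0 = 0)
    (hF'mono : MonotoneOn F' (Set.Ici (0 : ℝ)))
    (φ φ' : ℝ → ℝ)
    (hφ : ∀ x ∈ Set.Icc a b, HasDerivAt φ (φ' x) x)
    (hφ'cont : ContinuousOn φ' (Set.Icc a b))
    (hφa : φ a = 0)
    (hφ'pos : ∀ x ∈ Set.Icc a b, 0 < φ' x)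
    (ϕ : ℝ → ℝ)
    (hϕconv : ConvexOn ℝ (Set.Ici (0 : ℝ)) ϕ)
    (hϕmono : MonotoneOn ϕ (Set.Ici (0 : ℝ)))
    (hϕnonneg : ∀ x ∈ Set.Ici (0 : ℝ), 0 ≤ ϕ x)
    (f f' : ℝ → ℝ)
    (hf : ∀ x ∈ Set.Icc a b, HasDerivAt f (f' x) x)
    (hf'cont : ContinuousOn f' (Set.Icc a b))
    (hfa : f a = 0) :
    ∫ x in a..b, F' (φ x * ϕ (|f x| / φ x)) * (φ' x * ϕ (|f' x| / φ' x)) ≤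
      F (∫ x in a..b, φ' x * ϕ (|f' x| / φ' x)) := by
  have hϕcont := hϕconv.continuousOn_Ici_of_monotoneOn hϕmono
  have hφcont : ContinuousOn φ (Icc a b) := fun x hx ↦ (hφ x hx).continuousAt.continuousWithinAt
  have hfcont : ContinuousOn f (Icc a b) := fun x hx ↦ (hf x hx).continuousAt.continuousWithinAt
  have hφmono : StrictMonoOn φ (Icc a b) := strictMonoOn_of_hasDerivWithinAt_pos (convex_Icc a b)
    hφcont (fun x hx ↦ (hφ x (interior_subset hx)).hasDerivWithinAt)
    fun x hx ↦ hφ'pos x (interior_subset hx)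
  have hφpos : ∀ x ∈ Ioc a b, 0 < φ x := fun x hx ↦
    hφa ▸ hφmono ⟨le_rfl, hab.le⟩ (Ioc_subset_Icc_self hx) hx.1
  have hφ0 : ∀ x ∈ Icc a b, 0 ≤ φ x := fun x hx ↦ hφa ▸ hφmono.monotoneOn ⟨le_rfl, hab.le⟩ hx hx.1
  have hpersp0 : ∀ p q : ℝ, 0 ≤ p → 0 ≤ p * ϕ (|q| / p) := fun p q hp ↦
    mul_nonneg hp (hϕnonneg _ (div_nonneg (abs_nonneg q) hp))
  have hw := continuousOn_perspective hϕcont hφ'cont hf'cont hφ'pos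
  simpa only [hF0, sub_zero] using integral_deriv_comp_mul_le_of_le_primitive hab.le hFderiv
    hF'cont hF'mono hw (fun x hx ↦ hpersp0 _ _ (hφ'pos x hx).le)
    (continuousOn_perspective hϕcont (hφcont.mono Ioc_subset_Icc_self)
      (hfcont.mono Ioc_subset_Icc_self) hφpos)
    (fun x hx ↦ hpersp0 _ _ (hφ0 x hx))
    fun x hx ↦ hϕconv.perspective_le_integral_perspective_deriv hϕmono hφ hφ'cont hφa hφ'pos hf
      hf'cont hfa (hw.intervalIntegrable_of_Icc hab.le) hx

/-- One-dimensional real case of Theorem 3.20 (Rozanova-type inequality):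
with `F ∈ ℋ¹_∞` (i.e. `F` is `C¹` on `[0,∞)`, `F 0 = 0`, `F'` nonnegative and
increasing), `φ` C¹ with `φ a = 0` and `φ' > 0`, `ϕ` convex increasing with
`ϕ 0 = 0`, and `f` C¹ with `f a = 0`, one has
`∫ₐᵇ F'(φ ϕ(|f|/φ)) φ' ϕ(|f'|/φ') ≤ F (∫ₐᵇ φ' ϕ(|f'|/φ'))`. -/
theorem rozanova_type (a b : ℝ) (hab : a < b)
    (F F' : ℝ → ℝ)
    (hFderiv : ∀ x ∈ Set.Ici (0 : ℝ), HasDerivAt F (F' x) x)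
    (hF'cont : ContinuousOn F' (Set.Ici (0 : ℝ)))
    (hF0 : F 0 = 0)
    (hF'nonneg : ∀ x ∈ Set.Ici (0 : ℝ), 0 ≤ F' x)
    (hF'mono : MonotoneOn F' (Set.Ici (0 : ℝ)))
    (φ φ' : ℝ → ℝ)
    (hφ : ∀ x ∈ Set.Icc a b, HasDerivAt φ (φ' x) x)
    (hφ'cont : ContinuousOn φ' (Set.Icc a b))
    (hφa : φ a = 0)
    (hφ'pos : ∀ x ∈ Set.Icc a b, 0 < φ' x)
    (ϕ : ℝ → ℝ)
    (hϕconv : ConvexOn ℝ (Set.Ici (0 : ℝ)) ϕ)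
    (hϕmono : MonotoneOn ϕ (Set.Ici (0 : ℝ)))
    (hϕ0 : ϕ 0 = 0)
    (hϕnonneg : ∀ x ∈ Set.Ici (0 : ℝ), 0 ≤ ϕ x)
    (f f' : ℝ → ℝ)
    (hf : ∀ x ∈ Set.Icc a b, HasDerivAt f (f' x) x)
    (hf'cont : ContinuousOn f' (Set.Icc a b))
    (hfa : f a = 0) :
    ∫ x in a..b, F' (φ x * ϕ (|f x| / φ x)) * (φ' x * ϕ (|f' x| / φ' x)) ≤
      F (∫ x in a..b, φ' x * ϕ (|f' x| / φ' x)) :=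
  rozanova_type_general a b hab F F' hFderiv hF'cont hF0 hF'mono φ φ' hφ hφ'cont hφa hφ'pos ϕ hϕconv
    hϕmono hϕnonneg f f' hf hf'cont hfa
end
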